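/- Let μ ∈ ℂ and define, for z in the cut plane ℂ ∖ (−∞,0] with z ≠ 1, the sequence G_{μ,0}(z) = z^{μ+3/2}/(z² − 1) (principal power) and G_{μ,s+1}(z) = (G_{μ,s}(z) + 4z² G_{μ,s}''(z))/(4(1 − z²)). Then for every s ≥ 0 there exists a polynomial P_s (depending on μ) such that G_{μ,s}(z) = z^{μ+3/2} P_s(z²)/(1 − z²)^{3s+1} for all z in the cut plane with z ≠ 1; in particular G_{μ,s}(z) = O(z^{μ+3/2}) as z → 0 in the cut plane, i.e. z^{−μ−3/2} G_{μ,s}(z) remains bounded as z → 0. -/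

import Mathlib

/-!
With `c = μ + 3/2`, write `G_{μ,s}(z) = z^c R_s(z²)`. Conjugating by `z^c` turns the operator
`G ↦ G + 4z² G''` into `R ↦ (1 + 4c(c-1)) R + (16c+8) w R' + 16 w² R''` in the variable `w = z²`,
and differentiating `P(w)/(1-w)^n` gives a polynomial over `(1-w)^(n+1)`. So each step of the
recursion raises the pole order at `w = 1` by three (two derivatives and the division by `1 - z²`).
The bound near `0` holds because `R_s` is continuous at `0`.
-/

/-- The coefficients `G_{μ,s}(z)`: `G_{μ,0}(z) = z^(μ+3/2)/(z²-1)` (principal power) and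
`G_{μ,s+1}(z) = (G_{μ,s}(z) + 4z² G_{μ,s}''(z))/(4(1-z²))`. -/
noncomputable def Gmu (μ : ℂ) : ℕ → ℂ → ℂ
  | 0 => fun z => z ^ (μ + 3 / 2) / (z ^ 2 - 1)
  | s + 1 => fun z => (Gmu μ s z + 4 * z ^ 2 * deriv (deriv (Gmu μ s)) z) / (4 * (1 - z ^ 2))

open Polynomial Filter Topology

namespace Polynomial

variable {R : Type*} [CommRing R]

noncomputable def derivNumOneSubPow (n : ℕ) (P : R[X]) : R[X] :=
  derivative P * (1 - X) + C (n : R) * P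

lemma eval_derivNumOneSubPow (n : ℕ) (P : R[X]) (w : R) :
    (derivNumOneSubPow n P).eval w = (derivative P).eval w * (1 - w) + n * P.eval w := by
  simp [derivNumOneSubPow]

variable {𝕜 : Type*} [NontriviallyNormedField 𝕜]

lemma hasDerivAt_eval_div_one_sub_pow (n : ℕ) (P : 𝕜[X]) {w : 𝕜} (hw : 1 - w ≠ 0) :
    HasDerivAt (fun w => P.eval w / (1 - w) ^ n)
      ((derivNumOneSubPow n P).eval w / (1 - w) ^ (n + 1)) w := by
  have hden : HasDerivAt (fun w : 𝕜 => (1 - w) ^ n) (n * (1 - w) ^ (n - 1) * -1) w :=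
    ((hasDerivAt_id w).const_sub 1).fun_pow n
  refine ((P.hasDerivAt w).div hden (pow_ne_zero n hw)).congr_deriv ?_
  rw [eval_derivNumOneSubPow]
  rcases n with _ | n
  · field_simp
    ring
  · rw [Nat.add_sub_cancel]
    field_simp
    ring

end Polynomial

lemma hasDerivAt_sq {𝕜 : Type*} [NontriviallyNormedField 𝕜] (x : 𝕜) :
    HasDerivAt (fun y => y ^ 2) (2 * x) x := by
  simpa using hasDerivAt_pow 2 x

open Complex

lemma hasDerivAt_cpow_const_mul {c z h' : ℂ} {h : ℂ → ℂ} (hz : z ∈ slitPlane)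
    (hh : HasDerivAt h h' z) :
    HasDerivAt (fun w => w ^ c * h w) (z ^ c * (c * h z / z + h')) z := by
  refine ((hasStrictDerivAt_cpow_const hz).hasDerivAt.mul hh).congr_deriv ?_
  rw [cpow_sub _ _ (slitPlane_ne_zero hz), cpow_one]
  ring

lemma add_four_mul_sq_mul_deriv_deriv_eq {c z : ℂ} {G R R₁ R₂ : ℂ → ℂ} (hz : z ∈ slitPlane)
    (hG : G =ᶠ[𝓝 z] fun w => w ^ c * R (w ^ 2))
    (hR : ∀ᶠ w in 𝓝 z, HasDerivAt R (R₁ (w ^ 2)) (w ^ 2))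
    (hR₁ : HasDerivAt R₁ (R₂ (z ^ 2)) (z ^ 2)) :
    G z + 4 * z ^ 2 * deriv (deriv G) z = z ^ c * ((1 + 4 * c * (c - 1)) * R (z ^ 2)
      + (16 * c + 8) * z ^ 2 * R₁ (z ^ 2) + 16 * z ^ 4 * R₂ (z ^ 2)) := by
  have hz0 := slitPlane_ne_zero hz
  set h₁ : ℂ → ℂ := fun w => c * R (w ^ 2) / w + R₁ (w ^ 2) * (2 * w) with hh₁_def
  have hderiv : deriv G =ᶠ[𝓝 z] fun w => w ^ c * h₁ w := by
    filter_upwards [hG.eventuallyEq_nhds, hR, isOpen_slitPlane.mem_nhds hz] with w hGw hRw hw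
    rw [hGw.deriv_eq]
    exact (hasDerivAt_cpow_const_mul hw (hRw.comp w (hasDerivAt_sq w))).deriv
  have hh₁ : HasDerivAt h₁ (c * (R₁ (z ^ 2) * (2 * z) * z - R (z ^ 2)) / z ^ 2
      + (R₂ (z ^ 2) * (2 * z) * (2 * z) + R₁ (z ^ 2) * 2)) z := by
    have hRz := hR.self_of_nhds.comp z (hasDerivAt_sq z)
    refine ((hRz.const_mul c).div (hasDerivAt_id z) hz0).add
      ((hR₁.comp z (hasDerivAt_sq z)).mul ((hasDerivAt_id z).const_mul 2)) |>.congr_deriv ?_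
    simp only [id, Function.comp_apply]
    ring
  rw [hG.eq_of_nhds, hderiv.deriv_eq, (hasDerivAt_cpow_const_mul hz hh₁).deriv, hh₁_def]
  field_simp
  ring

lemma one_sub_sq_ne_zero_of_mem_slitPlane {z : ℂ} (hz : z ∈ slitPlane) (h1 : z ≠ 1) :
    1 - z ^ 2 ≠ 0 := by
  have hneg : z ≠ -1 := by
    rintro rfl
    norm_num [mem_slitPlane_iff] at hz
  rw [sub_ne_zero, ne_comm, Ne, sq_eq_one_iff]
  exact not_or_intro h1 hneg

noncomputable def GmuPoly (μ : ℂ) : ℕ → ℂ[X]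
  | 0 => -1
  | s + 1 =>
    let c := μ + 3 / 2
    let n := 3 * s + 1
    let P₁ := derivNumOneSubPow n (GmuPoly μ s)
    C 4⁻¹ * (C (1 + 4 * c * (c - 1)) * GmuPoly μ s * (1 - X) ^ 2
      + C (16 * c + 8) * X * P₁ * (1 - X) + C 16 * X ^ 2 * derivNumOneSubPow (n + 1) P₁)

lemma Gmu_eq_cpow_mul_eval_div (μ : ℂ) (s : ℕ) {z : ℂ} (hz : z ∈ slitPlane) (h1 : z ≠ 1) :
    Gmu μ s z = z ^ (μ + 3 / 2) * (GmuPoly μ s).eval (z ^ 2) / (1 - z ^ 2) ^ (3 * s + 1) := by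
  have hz1 := one_sub_sq_ne_zero_of_mem_slitPlane hz h1
  induction s generalizing z with
  | zero =>
    simp only [Gmu, GmuPoly, eval_neg, eval_one]
    rw [pow_one, mul_neg_one, ← neg_sub, div_neg, neg_div]
  | succ s ih =>
    set c := μ + 3 / 2
    set n := 3 * s + 1
    set P := GmuPoly μ s
    have hU : ∀ᶠ w in 𝓝 z, w ∈ slitPlane ∧ w ≠ 1 :=
      (isOpen_slitPlane.inter isOpen_ne).mem_nhds ⟨hz, h1⟩
    have hG : Gmu μ s =ᶠ[𝓝 z] fun w => w ^ c * (P.eval (w ^ 2) / (1 - w ^ 2) ^ n) := by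
      filter_upwards [hU] with w ⟨hw, hw1⟩
      rw [ih hw hw1 (one_sub_sq_ne_zero_of_mem_slitPlane hw hw1), mul_div_assoc]
    have hR : ∀ᶠ w in 𝓝 z, HasDerivAt (fun w => P.eval w / (1 - w) ^ n)
        ((derivNumOneSubPow n P).eval (w ^ 2) / (1 - w ^ 2) ^ (n + 1)) (w ^ 2) := by
      filter_upwards [hU] with w ⟨hw, hw1⟩
      exact hasDerivAt_eval_div_one_sub_pow n P (one_sub_sq_ne_zero_of_mem_slitPlane hw hw1)
    have hR₁ := hasDerivAt_eval_div_one_sub_pow (n + 1) (derivNumOneSubPow n P) hz1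
    have key := add_four_mul_sq_mul_deriv_deriv_eq
      (R := fun w => P.eval w / (1 - w) ^ n)
      (R₁ := fun w => (derivNumOneSubPow n P).eval w / (1 - w) ^ (n + 1))
      (R₂ := fun w => (derivNumOneSubPow (n + 1) (derivNumOneSubPow n P)).eval w
        / (1 - w) ^ (n + 1 + 1)) hz hG hR hR₁
    show (Gmu μ s z + 4 * z ^ 2 * deriv (deriv (Gmu μ s)) z) / (4 * (1 - z ^ 2)) = _
    rw [key]
    simp only [GmuPoly, eval_mul, eval_add, eval_C, eval_pow, eval_sub, eval_one, eval_X]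
    rw [show 3 * (s + 1) + 1 = n + 3 by omega]
    field_simp
    ring

lemma cpow_neg_mul_cpow_mul_div {z : ℂ} (hz : z ≠ 0) (c a b : ℂ) :
    z ^ (-c) * (z ^ c * a / b) = a / b := by
  rw [cpow_neg, mul_div_assoc, inv_mul_cancel_left₀ (cpow_ne_zero_iff.2 (Or.inl hz))]

/-- For every `s` there is a polynomial `P_s` (depending on `μ`) with
`G_{μ,s}(z) = z^(μ+3/2) P_s(z²)/(1-z²)^(3s+1)` on the cut plane minus `{1}`; in particular
`z^(-μ-3/2) G_{μ,s}(z)` remains bounded as `z → 0` in the cut plane. -/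
theorem Gmu_structure (μ : ℂ) (s : ℕ) :
    (∃ P : Polynomial ℂ, ∀ z ∈ Complex.slitPlane, z ≠ 1 →
        Gmu μ s z = z ^ (μ + 3 / 2) * P.eval (z ^ 2) / (1 - z ^ 2) ^ (3 * s + 1)) ∧
    (∃ C r : ℝ, 0 < C ∧ 0 < r ∧ ∀ z ∈ Complex.slitPlane, ‖z‖ ≤ r →
        ‖z ^ (-μ - 3 / 2) * Gmu μ s z‖ ≤ C) := by
  refine ⟨⟨GmuPoly μ s, fun z hz h1 => Gmu_eq_cpow_mul_eval_div μ s hz h1⟩, ?_⟩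
  set f : ℂ → ℂ := fun z => (GmuPoly μ s).eval (z ^ 2) / (1 - z ^ 2) ^ (3 * s + 1)
  have hf : ContinuousAt f 0 := by
    exact (Continuous.continuousAt (by fun_prop)).div (by fun_prop) (by simp)
  have hnear : ∀ᶠ z in 𝓝 (0 : ℂ), z ≠ 1 ∧ ‖f z‖ < ‖f 0‖ + 1 :=
    (eventually_ne_nhds zero_ne_one).and (hf.norm.eventually (gt_mem_nhds (lt_add_one _)))
  obtain ⟨r, hr, hball⟩ := Metric.nhds_basis_closedBall.eventually_iff.1 hnear
  refine ⟨‖f 0‖ + 1, r, by positivity, hr, fun z hz hzr => ?_⟩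
  obtain ⟨h1, hfz⟩ := hball (mem_closedBall_zero_iff.2 hzr)
  rw [Gmu_eq_cpow_mul_eval_div μ s hz h1, show -μ - 3 / 2 = -(μ + 3 / 2) by ring,
    cpow_neg_mul_cpow_mul_div (slitPlane_ne_zero hz)]
  exact hfz.le
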